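/- arXiv:2405.13248 — 2 statements merged into one kernel-verified Lean document; each statement's English description precedes it below -/
import Mathlib

section
/- Let R be a finite ring with |R| = q, let f : R^{d-1} → R be induced by a polynomial with integer coefficients and zero constant term, and suppose V_{f,1} = {(x_1,...,x_d) : x_d = f(x_1,...,x_{d-1}) + 1} is C-Salem in R^d. Then every proper left ideal (and every proper right ideal) I of R satisfies |I| ≤ C^{1/d} · q^{1/2 + 1/(2d)}. -/
/-!
Let `I` be a proper one-sided ideal. A polynomial without constant term maps `I^(d-1)` into `I`,
so a point `x ∈ Iᵈ` on `V` would give `1 = x_d - f(x₁, …, x_{d-1}) ∈ I`: the graph `V` misses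
the subgroup `Iᵈ`. Hence the characters of `Rᵈ ⧸ Iᵈ` sum to zero over `V`, and the trivial
character's contribution `|V| = q^(d-1)` is at most `([Rᵈ : Iᵈ] - 1) · C |V|^(1/2)`, which
gives `|I|ᵈ ≤ C q^((d+1)/2)`.
-/

open Finset

theorem FreeAlgebra.lift_mem_of_lift_zero_eq_zero {R : Type*} [Ring R] (J : AddSubgroup R)
    (hJ : ∀ a ∈ J, ∀ b ∈ J, a * b ∈ J) {ι : Type*} (p : FreeAlgebra ℤ ι)
    (hp : FreeAlgebra.lift ℤ (fun _ : ι => (0 : ℤ)) p = 0) (x : ι → R) (hx : ∀ i, x i ∈ J) :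
    FreeAlgebra.lift ℤ x p ∈ J := by
  -- `J` need not contain `1`, so induct on `p(x) - p(0)`, with `p(0)` the integer constant term
  suffices key : ∀ p,
      FreeAlgebra.lift ℤ x p - (FreeAlgebra.lift ℤ (fun _ : ι => (0 : ℤ)) p : R) ∈ J by
    simpa [hp] using key p
  intro p
  induction p with
  | grade0 r => simp
  | grade1 i => simpa using hx i
  | add a b ha hb => simpa [add_sub_add_comm] using J.add_mem ha hb
  | mul a b ha hb =>
    set n : ℤ := FreeAlgebra.lift ℤ (fun _ : ι => (0 : ℤ)) a
    set m : ℤ := FreeAlgebra.lift ℤ (fun _ : ι => (0 : ℤ)) b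
    set u := FreeAlgebra.lift ℤ x a - n
    set v := FreeAlgebra.lift ℤ x b - m
    have h : FreeAlgebra.lift ℤ x (a * b) - ((n * m : ℤ) : R) = u * v + m • u + n • v := by
      rw [zsmul_eq_mul, zsmul_eq_mul, Int.cast_comm, map_mul, Int.cast_mul]
      simp only [u, v]
      noncomm_ring
    rw [map_mul (FreeAlgebra.lift ℤ fun _ : ι => (0 : ℤ)), h]
    exact J.add_mem (J.add_mem (hJ u ha v hb) (J.zsmul_mem ha m)) (J.zsmul_mem hb n)

theorem Finset.card_le_index_sub_one_mul_of_norm_sum_addChar_le {G : Type*} [AddCommGroup G]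
    [Finite G] (S : Finset G) (H : AddSubgroup G) (hSH : ∀ x ∈ S, x ∉ H) (B : ℝ)
    (hB : ∀ ψ : AddChar G ℂ, ψ ≠ 1 → ‖∑ x ∈ S, ψ x‖ ≤ B) :
    (#S : ℝ) ≤ ((H.index : ℝ) - 1) * B := by
  classical
  have := Fintype.ofFinite (G ⧸ H)
  let π : G →+ G ⧸ H := QuotientAddGroup.mk' H
  let F : AddChar (G ⧸ H) ℂ → ℂ := fun χ => ∑ x ∈ S, χ (π x)
  have hF_bound (χ : AddChar (G ⧸ H) ℂ) (hχ : χ ≠ 1) : ‖F χ‖ ≤ B := by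
    refine hB (χ.compAddMonoidHom π) fun h => hχ ?_
    ext y
    obtain ⟨x, rfl⟩ := QuotientAddGroup.mk'_surjective H y
    exact DFunLike.congr_fun h x
  -- orthogonality of the characters of `G ⧸ H`, since `π x ≠ 0` for `x ∈ S`
  have hF_sum : ∑ χ, F χ = 0 := by
    rw [Finset.sum_comm]
    refine sum_eq_zero fun x hx => AddChar.sum_apply_eq_zero_iff_ne_zero.2 fun h => ?_
    exact hSH x hx ((QuotientAddGroup.eq_zero_iff x).1 h)
  have hF_one : F 1 = #S := by simp [F]
  calc (#S : ℝ) = ‖∑ χ ∈ univ.erase 1, F χ‖ := by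
        rw [← sum_erase_add _ _ (mem_univ 1), hF_one, add_eq_zero_iff_eq_neg] at hF_sum
        simp [hF_sum]
    _ ≤ ∑ χ ∈ univ.erase 1, B :=
        norm_sum_le_of_le _ fun χ hχ => hF_bound χ (ne_of_mem_erase hχ)
    _ = ((H.index : ℝ) - 1) * B := by
        rw [sum_const, card_erase_of_mem (mem_univ _), card_univ, AddChar.card_eq,
          AddSubgroup.index, Nat.card_eq_fintype_card, nsmul_eq_mul,
          Nat.cast_pred Fintype.card_pos]

theorem card_filter_snd_eq_apply_fst {α β : Type*} [Fintype α] [Fintype β] [DecidableEq β]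
    (g : α → β) : #(univ.filter fun x : α × β => x.2 = g x.1) = Fintype.card α := by
  classical
  have hinj : Function.Injective fun a : α => (a, g a) := fun a b h => congrArg Prod.fst h
  rw [← card_univ, ← card_image_of_injective _ hinj]
  congr 1
  ext ⟨a, b⟩
  simp [eq_comm]

theorem AddSubgroup.card_pi_univ {ι : Type*} [Fintype ι] {G : ι → Type*} [∀ i, AddGroup (G i)]
    (H : ∀ i, AddSubgroup (G i)) :
    Nat.card (AddSubgroup.pi Set.univ H) = ∏ i, Nat.card (H i) := by
  rw [← Nat.card_pi]
  exact Nat.card_congr ((Equiv.subtypeEquivRight (by simp [AddSubgroup.mem_pi])).trans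
    (Equiv.subtypePiEquivPi))

/-- The paper's `|Ŝ(ψ)| ≤ C |R|^(-d) |S|^(1/2)` with `Ŝ(ψ) = |R|^(-d) ∑_{x ∈ S} ψ(x)`, after
cancelling the common normalization. -/
def IsSalem {G : Type*} [AddCommGroup G] (S : Finset G) (C : ℝ) : Prop :=
  ∀ ψ : AddChar G ℂ, ψ ≠ 1 → ‖∑ x ∈ S, ψ x‖ ≤ C * (#S : ℝ) ^ ((1 : ℝ) / 2)

theorem IsSalem.card_mul_sqrt_card_le {G : Type*} [AddCommGroup G] [Finite G] {S : Finset G}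
    {C : ℝ} (hS : IsSalem S C) (hne : S.Nonempty) (H : AddSubgroup G) (hSH : ∀ x ∈ S, x ∉ H) :
    (Nat.card H : ℝ) * √(#S : ℝ) ≤ C * Nat.card G := by
  have hsqrt : 0 < √(#S : ℝ) := Real.sqrt_pos.2 (by exact_mod_cast hne.card_pos)
  have hS' : ∀ ψ : AddChar G ℂ, ψ ≠ 1 → ‖∑ x ∈ S, ψ x‖ ≤ C * √(#S : ℝ) := by
    simpa only [IsSalem, Real.sqrt_eq_rpow] using hS
  have h := S.card_le_index_sub_one_mul_of_norm_sum_addChar_le H hSH _ hS'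
  have h' : √(#S : ℝ) ≤ ((H.index : ℝ) - 1) * C := by
    refine le_of_mul_le_mul_right ?_ hsqrt
    rw [Real.mul_self_sqrt (Nat.cast_nonneg _)]
    linarith
  have hindex : (1 : ℝ) ≤ H.index := by
    exact_mod_cast Nat.one_le_iff_ne_zero.2 H.index_ne_zero_of_finite
  have hC : 0 ≤ C := (pos_of_mul_pos_right (hsqrt.trans_le h') (by linarith)).le
  calc (Nat.card H : ℝ) * √(#S : ℝ) ≤ Nat.card H * (H.index * C) := by gcongr; linarith
    _ = C * Nat.card G := by rw [← H.card_mul_index]; push_cast; ring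

theorem le_rpow_mul_rpow_of_pow_le_mul_sqrt_pow {a C q : ℝ} {d : ℕ} (ha : 0 < a) (hq : 0 ≤ q)
    (hd : d ≠ 0) (h : a ^ d ≤ C * √q ^ (d + 1)) :
    a ≤ C ^ ((1 : ℝ) / d) * q ^ ((1 : ℝ) / 2 + 1 / (2 * d)) := by
  have hC : 0 ≤ C := (pos_of_mul_pos_left ((pow_pos ha d).trans_le h) (by positivity)).le
  have hsqrt : √q ^ (d + 1) = q ^ (((d : ℝ) + 1) / 2) := by
    rw [Real.sqrt_eq_rpow, ← Real.rpow_natCast, ← Real.rpow_mul hq]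
    push_cast
    ring_nf
  calc a = (a ^ d) ^ ((1 : ℝ) / d) := by
        rw [← Real.rpow_natCast, ← Real.rpow_mul ha.le,
          mul_one_div_cancel (by exact_mod_cast hd), Real.rpow_one]
    _ ≤ (C * √q ^ (d + 1)) ^ ((1 : ℝ) / d) := by gcongr
    _ = C ^ ((1 : ℝ) / d) * q ^ ((1 : ℝ) / 2 + 1 / (2 * d)) := by
        rw [Real.mul_rpow hC (by positivity), hsqrt, ← Real.rpow_mul hq]
        congr 2
        field_simp

theorem card_pow_le_of_isSalem_graph {R : Type*} [Ring R] [Fintype R] [DecidableEq R] {n : ℕ}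
    (f : (Fin n → R) → R) {C : ℝ}
    (hV : IsSalem (univ.filter fun x : (Fin n → R) × R => x.2 = f x.1 + 1) C)
    (J : AddSubgroup R) (hJ : (1 : R) ∉ J) (hf : ∀ x, (∀ i, x i ∈ J) → f x ∈ J) :
    (Nat.card J : ℝ) ^ (n + 1) ≤ C * √(Fintype.card R) ^ (n + 2) := by
  set V := univ.filter fun x : (Fin n → R) × R => x.2 = f x.1 + 1
  set H := (AddSubgroup.pi Set.univ fun _ : Fin n => J).prod J
  have hVH : ∀ x ∈ V, x ∉ H := by
    intro x hxV hxH
    rw [AddSubgroup.mem_prod, AddSubgroup.mem_pi] at hxH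
    have := J.sub_mem hxH.2 (hf x.1 fun i => hxH.1 i (Set.mem_univ i))
    rw [(mem_filter.1 hxV).2, add_sub_cancel_left] at this
    exact hJ this
  have hVne : V.Nonempty := ⟨(0, f 0 + 1), by simp [V]⟩
  have key := hV.card_mul_sqrt_card_le hVne H hVH
  have hH : Nat.card H = Nat.card J ^ (n + 1) := by
    rw [Nat.card_congr (AddSubgroup.prodEquiv _ _).toEquiv, Nat.card_prod,
      AddSubgroup.card_pi_univ]
    simp [pow_succ]
  have hVcard : #V = Fintype.card (Fin n → R) := card_filter_snd_eq_apply_fst fun a => f a + 1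
  rw [hH, hVcard, Nat.card_eq_fintype_card (α := (Fin n → R) × R), Fintype.card_prod,
    Fintype.card_fun, Fintype.card_fin] at key
  push_cast at key
  set s := √(Fintype.card R : ℝ)
  have hs : 0 < s := Real.sqrt_pos.2 (by exact_mod_cast Fintype.card_pos)
  rw [← Real.sq_sqrt (Nat.cast_nonneg (Fintype.card R)), ← pow_mul, mul_comm 2 n, pow_mul,
    Real.sqrt_sq (by positivity)] at key
  refine le_of_mul_le_mul_right (key.trans_eq ?_) (pow_pos hs n)
  ring

/-- If `f` is induced by a (noncommutative) polynomial with integer coefficients and zero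
constant term, and `V_{f,1} = {(x, y) : y = f(x) + 1} ⊆ R^d` is `C`-Salem, then every
proper left ideal and every proper right ideal `I` of `R` satisfies
`|I| ≤ C^{1/d} · q^{1/2 + 1/(2d)}` where `q = |R|`. -/
theorem stmt3 {R : Type} [Ring R] [Fintype R] [DecidableEq R] (d : ℕ) (hd : 2 ≤ d)
    (p : FreeAlgebra ℤ (Fin (d - 1)))
    (hp : FreeAlgebra.lift ℤ (fun _ : Fin (d - 1) => (0 : ℤ)) p = 0)
    (C : ℝ)
    (hSalem : ∀ ψ : AddChar ((Fin (d - 1) → R) × R) ℂ, ψ ≠ 1 →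
      ‖∑ x ∈ Finset.univ.filter
          (fun x : (Fin (d - 1) → R) × R => x.2 = FreeAlgebra.lift ℤ x.1 p + 1), ψ x‖
        ≤ C * ((Finset.univ.filter
          (fun x : (Fin (d - 1) → R) × R => x.2 = FreeAlgebra.lift ℤ x.1 p + 1)).card : ℝ)
            ^ ((1 : ℝ) / 2)) :
    (∀ I : Submodule R R, I ≠ ⊤ →
      (Nat.card I : ℝ) ≤ C ^ ((1 : ℝ) / d) *
        (Fintype.card R : ℝ) ^ ((1 : ℝ) / 2 + 1 / (2 * d)))
    ∧ (∀ I : Submodule Rᵐᵒᵖ R, I ≠ ⊤ →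
      (Nat.card I : ℝ) ≤ C ^ ((1 : ℝ) / d) *
        (Fintype.card R : ℝ) ^ ((1 : ℝ) / 2 + 1 / (2 * d))) := by
  have bound (J : AddSubgroup R) (hJ1 : (1 : R) ∉ J) (hJmul : ∀ a ∈ J, ∀ b ∈ J, a * b ∈ J) :
      (Nat.card J : ℝ) ≤ C ^ ((1 : ℝ) / d) *
        (Fintype.card R : ℝ) ^ ((1 : ℝ) / 2 + 1 / (2 * d)) := by
    have h := card_pow_le_of_isSalem_graph (fun a => FreeAlgebra.lift ℤ a p) hSalem J hJ1
      (FreeAlgebra.lift_mem_of_lift_zero_eq_zero J hJmul p hp)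
    rw [Nat.sub_add_cancel (by omega), show d - 1 + 2 = d + 1 by omega] at h
    exact le_rpow_mul_rpow_of_pow_le_mul_sqrt_pow (by exact_mod_cast Nat.card_pos)
      (Nat.cast_nonneg _) (by omega) h
  refine ⟨fun I hI => bound I.toAddSubgroup ((Ideal.ne_top_iff_one I).1 hI)
      fun a _ b hb => I.smul_mem a hb, fun I hI => bound I.toAddSubgroup ?_
      fun a ha b _ => I.smul_mem (MulOpposite.op b) ha⟩
  exact fun h1 => hI (eq_top_iff.2 fun x _ => by simpa using I.smul_mem (MulOpposite.op x) h1)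
end

section
/- Let F be a finite field of odd characteristic, ψ a nontrivial additive character, and n ∈ {2,3,4}. Let A ∈ M_n(F) have 1 in the (1,1) entry and 0 elsewhere. Then |Σ_{C ∈ M_n(F)} ψ(Tr(-AC - AC^2))| = |F|^{n^2 - n} · |F|^{1/2}. -/
/-! With `A = E₁₁`, `Tr(-AC - AC²) = -a - a² - ∑ⱼ bⱼ cⱼ`, where `a = C₁₁` and `b`, `c` are the rest
of the first row and column. The remaining `(n-1)²` entries are free, the sum over the pairs
`(b, c)` is `|F|^(n-1)` by orthogonality of characters, and completing the square turns
`∑ₐ ψ(-a - a²)` into a quadratic Gauss sum, of modulus `|F|^(1/2)`. -/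

open Matrix Finset

namespace AddChar

variable {R R' : Type*}

lemma map_sum_eq_prod [AddCommMonoid R] [CommMonoid R'] (ψ : AddChar R R') {ι : Type*}
    (s : Finset ι) (f : ι → R) : ψ (∑ i ∈ s, f i) = ∏ i ∈ s, ψ (f i) := by
  induction s using Finset.cons_induction with
  | empty => simp
  | cons a s _ ih => rw [sum_cons, prod_cons, map_add_eq_mul, ih]

lemma sum_sum_dotProduct [CommRing R] [Fintype R] [DecidableEq R] [CommRing R'] [IsDomain R']
    {ψ : AddChar R R'} (hψ : ψ.IsPrimitive) (ι : Type*) [Fintype ι] [DecidableEq ι] :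
    ∑ x : ι → R, ∑ y : ι → R, ψ (x ⬝ᵥ y) = (Fintype.card R : R') ^ Fintype.card ι := by
  calc ∑ x : ι → R, ∑ y : ι → R, ψ (x ⬝ᵥ y)
      = ∑ x : ι → R, ∏ i, ∑ t : R, ψ (t * x i) := by
        refine sum_congr rfl fun x _ => ?_
        rw [Fintype.prod_sum]
        refine sum_congr rfl fun y _ => ?_
        simp only [dotProduct, map_sum_eq_prod, mul_comm]
    _ = ∑ x : ι → R, ∏ i, if x i = 0 then (Fintype.card R : R') else 0 := by
        simp only [sum_mulShift _ hψ, apply_ite (Nat.cast : ℕ → R'), Nat.cast_zero]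
    _ = (Fintype.card R : R') ^ Fintype.card ι := by
        rw [← Fintype.prod_sum (fun (_ : ι) (s : R) => if s = 0 then (Fintype.card R : R') else 0)]
        simp

end AddChar

namespace Matrix

lemma trace_neg_single_mul_sub_single_mul_sq {ι R : Type*} [Fintype ι] [DecidableEq ι]
    [CommRing R] (i : ι) (C : Matrix ι ι R) :
    trace (-(single i i 1 * C) - single i i 1 * C ^ 2) = -C i i - ∑ k, C i k * C k i := by
  simp only [trace_sub, trace_neg, trace_single_mul, one_smul, sq, mul_apply]

/-- The matrix `!![a, x; y, D]` in block form. -/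
@[simps]
def consEquiv (X : Type*) (m : ℕ) :
    X × (Fin m → X) × (Fin m → X) × Matrix (Fin m) (Fin m) X ≃
      Matrix (Fin (m + 1)) (Fin (m + 1)) X where
  toFun p := of (Fin.cons (Fin.cons p.1 p.2.1) fun k => Fin.cons (p.2.2.1 k) (p.2.2.2 k))
  invFun C := (C 0 0, fun k => C 0 k.succ, fun k => C k.succ 0, of fun k l => C k.succ l.succ)
  left_inv _ := rfl
  right_inv C := by
    ext i j
    cases i using Fin.cases <;> cases j using Fin.cases <;> simp

end Matrix

lemma AddChar.sum_matrix_neg_hook {R R' : Type*} [CommRing R] [Fintype R] [DecidableEq R]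
    [CommRing R'] [IsDomain R'] {ψ : AddChar R R'} (hψ : ψ.IsPrimitive) (m : ℕ) :
    ∑ C : Matrix (Fin (m + 1)) (Fin (m + 1)) R, ψ (-C 0 0 - ∑ k, C 0 k * C k 0)
      = (∑ a : R, ψ (-a - a * a)) * (Fintype.card R : R') ^ (m + m * m) := by
  have hsplit : ∀ (a : R) (x y : Fin m → R),
      ψ (-a - (a * a + ∑ k, x k * y k)) = ψ (-a - a * a) * ψ ((-x) ⬝ᵥ y) := by
    intro a x y
    rw [← map_add_eq_mul, neg_dotProduct, dotProduct]
    ring_nf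
  rw [← (consEquiv R m).sum_comp]
  simp only [consEquiv_apply, of_apply, Fin.sum_univ_succ, Fin.cons_zero,
    Fin.cons_succ, hsplit, Fintype.sum_prod_type, sum_const, card_univ, ← mul_sum, ← sum_mul]
  congr 1
  have hneg := Equiv.sum_comp (Equiv.neg (Fin m → R)) fun x => ∑ y, ψ (x ⬝ᵥ y)
  simp only [Equiv.neg_apply] at hneg
  have hcard : Fintype.card (Matrix (Fin m) (Fin m) R) = Fintype.card R ^ (m * m) := by
    rw [Fintype.card_eq_nat_card]
    simp [Matrix, ← pow_mul]
  simp only [hcard, nsmul_eq_mul, ← mul_sum, hneg, sum_sum_dotProduct hψ, Fintype.card_fin,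
    Nat.cast_pow]
  ring

section QuadraticGaussSum

variable {F : Type*} [Field F] [Fintype F]

lemma sum_addChar_neg_sub_mul_self {R' : Type*} [CommRing R'] (hF : ringChar F ≠ 2)
    (ψ : AddChar F R') :
    ∑ a : F, ψ (-a - a * a) = ψ (2⁻¹ ^ 2) * ∑ b : F, ψ.mulShift (-1) (b ^ 2) := by
  have h2 : (2 : F) * 2⁻¹ = 1 := mul_inv_cancel₀ (Ring.two_ne_zero hF)
  rw [mul_sum]
  refine Fintype.sum_equiv (Equiv.addRight 2⁻¹) _ _ fun a => ?_
  rw [AddChar.mulShift_apply, ← AddChar.map_add_eq_mul, Equiv.coe_addRight]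
  congr 1
  linear_combination a * h2

variable [DecidableEq F]

lemma sum_addChar_sq_eq_gaussSum {R' : Type*} [CommRing R'] [IsDomain R'] (hF : ringChar F ≠ 2)
    {ψ : AddChar F R'} (hψ : ψ ≠ 1) :
    ∑ b : F, ψ (b ^ 2) = gaussSum ((quadraticChar F).ringHomComp (Int.castRingHom R')) ψ := by
  have hfiber : ∀ a : F, ∑ b with b ^ 2 = a, ψ (b ^ 2) = ((quadraticChar F a : R') + 1) * ψ a := by
    intro a
    rw [sum_congr rfl fun b hb => by rw [(mem_filter.mp hb).2], sum_const, nsmul_eq_mul]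
    have hcard := quadraticChar_card_sqrts hF a
    rw [Set.toFinset_ofPred] at hcard
    exact congrArg (· * ψ a) (by exact_mod_cast congrArg (Int.cast : ℤ → R') hcard)
  rw [← sum_fiberwise univ (· ^ 2), sum_congr rfl fun a _ => hfiber a]
  simp only [add_mul, one_mul, sum_add_distrib, AddChar.sum_eq_zero_of_ne_one hψ, add_zero]
  rfl

lemma norm_sum_addChar_sq (hF : ringChar F ≠ 2) {ψ : AddChar F ℂ} (hψ : ψ ≠ 1) :
    ‖∑ b : F, ψ (b ^ 2)‖ = √(Fintype.card F) := by
  set χ := (quadraticChar F).ringHomComp (Int.castRingHom ℂ)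
  have hχ : ‖χ (-1)‖ = 1 := by
    rcases quadraticChar_dichotomy (neg_ne_zero.mpr (one_ne_zero' F)) with h | h <;>
      simp [χ, MulChar.ringHomComp_apply, h]
  have hsq : gaussSum χ ψ ^ 2 = χ (-1) * Fintype.card F :=
    gaussSum_sq ((MulChar.ringHomComp_ne_one_iff (RingHom.injective_int _)).mpr
      (quadraticChar_ne_one hF)) ((quadraticChar_isQuadratic F).comp _)
      (AddChar.IsPrimitive.of_ne_one hψ)
  rw [sum_addChar_sq_eq_gaussSum hF hψ, ← Real.sqrt_sq (norm_nonneg _), ← norm_pow, hsq,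
    norm_mul, hχ, one_mul, Complex.norm_natCast]

lemma norm_sum_addChar_neg_sub_mul_self (hF : ringChar F ≠ 2) {ψ : AddChar F ℂ} (hψ : ψ ≠ 1) :
    ‖∑ a : F, ψ (-a - a * a)‖ = √(Fintype.card F) := by
  rw [sum_addChar_neg_sub_mul_self hF, norm_mul, AddChar.norm_apply, one_mul]
  exact norm_sum_addChar_sq hF (AddChar.IsPrimitive.of_ne_one hψ (neg_ne_zero.mpr one_ne_zero))

end QuadraticGaussSum

/-- For a finite field `F` of odd characteristic, a nontrivial additive character `ψ`,
`n ∈ {2,3,4}`, and `A = E₁₁ ∈ Mₙ(F)`, the sum `∑_{C ∈ Mₙ(F)} ψ(Tr(-AC - AC²))` has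
modulus `|F|^{n²-n}·|F|^{1/2}`. -/
theorem stmt17 {F : Type} [Field F] [Fintype F] [DecidableEq F] (hchar : ringChar F ≠ 2)
    (ψ : AddChar F ℂ) (hψ : ψ ≠ 1) (n : ℕ) (hn : n = 2 ∨ n = 3 ∨ n = 4) :
    ‖∑ C : Matrix (Fin n) (Fin n) F,
        ψ (Matrix.trace
          (-(Matrix.single (⟨0, by omega⟩ : Fin n) (⟨0, by omega⟩ : Fin n) (1 : F) * C)
          - Matrix.single (⟨0, by omega⟩ : Fin n) (⟨0, by omega⟩ : Fin n) (1 : F)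
            * C ^ 2))‖
      = (Fintype.card F : ℝ) ^ (n ^ 2 - n) * (Fintype.card F : ℝ) ^ ((1 : ℝ) / 2) := by
  obtain ⟨m, rfl⟩ : ∃ m, n = m + 1 := ⟨n - 1, by omega⟩
  have hexp : (m + 1) ^ 2 - (m + 1) = m + m * m := by
    rw [add_sq, mul_one, one_pow, sq]
    omega
  simp only [Matrix.trace_neg_single_mul_sub_single_mul_sq]
  rw [show (⟨0, by omega⟩ : Fin (m + 1)) = 0 from rfl,
    AddChar.sum_matrix_neg_hook (AddChar.IsPrimitive.of_ne_one hψ) m, norm_mul, norm_pow,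
    Complex.norm_natCast, norm_sum_addChar_neg_sub_mul_self hchar hψ, hexp, Real.sqrt_eq_rpow,
    mul_comm]
end
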